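/- arXiv:2410.16435 — 2 statements merged into one kernel-verified Lean document; each statement's English description precedes it below -/
import Mathlib

section
/- Let q ∈ (0,1), a ≠ 0, b < 0 with |a| < |b|. Let f : [0,∞) → ℝ be continuous, let x solve x'(t) = a·x(q·t) + b·x(t) + f(t) for t > 0 with x(0) = ζ ∈ ℝ, and let y(t) := ∫₀ᵗ e^{-(t-s)} f(s) ds. Let γ ∈ RV_∞(η) for some η ∈ ℝ. If x(t) = O(γ(t)) as t → ∞, then y(t) = O(γ(t)) as t → ∞. Likewise, if x(t) = o(γ(t)) as t → ∞, then y(t) = o(γ(t)) as t → ∞. -/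
open Real Filter Set MeasureTheory

-- Lemma A
theorem lemA (η : ℝ) (γ : ℝ → ℝ) (hγpos : ∀ t ≥ (0:ℝ), 0 < γ t)
    (hγRV : ∀ l > (0 : ℝ), Tendsto (fun t => γ (l * t) / γ t) atTop (nhds (l ^ η)))
    (u : ℝ) :
    Tendsto (fun τ => Real.log (γ (Real.exp (τ + u))) - Real.log (γ (Real.exp τ)))
      atTop (nhds (η * u)) := by
  have h1 := hγRV (Real.exp u) (Real.exp_pos u)
  have h2 : Real.exp u ^ η = Real.exp (η * u) := by
    rw [Real.rpow_def_of_pos (Real.exp_pos u), Real.log_exp, mul_comm]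
  rw [h2] at h1
  have h3 : Tendsto (fun t => Real.log (γ (Real.exp u * t) / γ t)) atTop
      (nhds (η * u)) := by
    have := (Real.continuousAt_log (Real.exp_pos (η * u)).ne').tendsto.comp h1
    simpa [Real.log_exp, Function.comp_def] using this
  have h4 : Tendsto (fun t : ℝ => Real.log (γ (Real.exp u * t)) - Real.log (γ t)) atTop
      (nhds (η * u)) := by
    refine h3.congr' ?_
    filter_upwards [eventually_ge_atTop (1:ℝ)] with t ht
    have ht0 : (0:ℝ) < t := lt_of_lt_of_le one_pos ht
    rw [Real.log_div (hγpos _ (by positivity)).ne' (hγpos _ ht0.le).ne']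
  have h5 := h4.comp Real.tendsto_exp_atTop
  refine h5.congr fun τ => ?_
  simp [Function.comp, ← Real.exp_add, add_comm]

theorem myUCT (η : ℝ) (H : ℝ → ℝ) (hH : Measurable H)
    (hlim : ∀ u : ℝ, Tendsto (fun τ => H (τ + u) - H τ) atTop (nhds (η * u)))
    (ε : ℝ) (hε : 0 < ε) :
    ∃ T : ℝ, ∀ τ ≥ T, ∀ u, 0 ≤ u → u ≤ 1 → |H (τ + u) - H τ - η * u| ≤ ε := by
  by_contra hcon
  push_neg at hcon
  have h' : ∀ n : ℕ, ∃ τ : ℝ, (n:ℝ) ≤ τ ∧ ∃ u, 0 ≤ u ∧ u ≤ 1 ∧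
      ε < |H (τ + u) - H τ - η * u| := by
    intro n
    obtain ⟨τ, hτ, u, hu0, hu1, hbad⟩ := hcon (n : ℝ)
    exact ⟨τ, hτ, u, hu0, hu1, hbad⟩
  choose τ hτn u hu0 hu1 hbad using h'
  have τtop : Tendsto τ atTop atTop :=
    tendsto_atTop_mono hτn tendsto_natCast_atTop_atTop
  have τ'top : Tendsto (fun n => τ n + u n) atTop atTop :=
    tendsto_atTop_mono (fun n => le_add_of_nonneg_right (hu0 n)) τtop
  set S : ℕ → Set ℝ := fun n => {s | |H (τ n + s) - H (τ n) - η * s| ≤ ε/4} with hS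
  set S' : ℕ → Set ℝ := fun n => {s | |H (τ n + u n + s) - H (τ n + u n) - η * s| ≤ ε/4}
    with hS'
  set V : ℕ → Set ℝ := fun k => Icc 0 2 ∩ ⋂ n, ⋂ (_ : k ≤ n), S n with hV
  set W : ℕ → Set ℝ := fun k => Icc 0 2 ∩ ⋂ n, ⋂ (_ : k ≤ n), S' n with hW
  have hSmeas : ∀ n, MeasurableSet (S n) := by
    intro n
    exact measurableSet_le
      (((hH.comp (measurable_const.add measurable_id)).sub measurable_const).sub
        (measurable_const.mul measurable_id)).abs measurable_const
  have hS'meas : ∀ n, MeasurableSet (S' n) := by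
    intro n
    exact measurableSet_le
      (((hH.comp (measurable_const.add measurable_id)).sub measurable_const).sub
        (measurable_const.mul measurable_id)).abs measurable_const
  have hVmeas : ∀ k, MeasurableSet (V k) := fun k =>
    measurableSet_Icc.inter (MeasurableSet.iInter fun n => MeasurableSet.iInter fun _ => hSmeas n)
  have hWmeas : ∀ k, MeasurableSet (W k) := fun k =>
    measurableSet_Icc.inter (MeasurableSet.iInter fun n => MeasurableSet.iInter fun _ => hS'meas n)
  have hVmono : Monotone V := by
    intro k k' hkk' s hs
    refine ⟨hs.1, ?_⟩
    rw [mem_iInter₂]; intro n hn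
    exact (mem_iInter₂.mp hs.2) n (le_trans hkk' hn)
  have hWmono : Monotone W := by
    intro k k' hkk' s hs
    refine ⟨hs.1, ?_⟩
    rw [mem_iInter₂]; intro n hn
    exact (mem_iInter₂.mp hs.2) n (le_trans hkk' hn)
  have hVU : ⋃ k, V k = Icc (0:ℝ) 2 := by
    apply Subset.antisymm
    · exact iUnion_subset fun k => inter_subset_left
    · intro s hs
      have := (hlim s).comp τtop
      obtain ⟨k, hk⟩ := (Metric.tendsto_atTop.mp this) (ε/4) (by positivity)
      refine mem_iUnion.mpr ⟨k, hs, ?_⟩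
      rw [mem_iInter₂]; intro n hn
      have := hk n hn
      simp only [Function.comp, Real.dist_eq] at this
      exact le_of_lt (by simpa using this)
  have hWU : ⋃ k, W k = Icc (0:ℝ) 2 := by
    apply Subset.antisymm
    · exact iUnion_subset fun k => inter_subset_left
    · intro s hs
      have := (hlim s).comp τ'top
      obtain ⟨k, hk⟩ := (Metric.tendsto_atTop.mp this) (ε/4) (by positivity)
      refine mem_iUnion.mpr ⟨k, hs, ?_⟩
      rw [mem_iInter₂]; intro n hn
      have := hk n hn
      simp only [Function.comp, Real.dist_eq] at this
      exact le_of_lt (by simpa using this)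
  have hIcc2 : volume (Icc (0:ℝ) 2) = ENNReal.ofReal 2 := by
    rw [Real.volume_Icc]; norm_num
  have hlt : ENNReal.ofReal (15/8) < ENNReal.ofReal 2 := by
    rw [ENNReal.ofReal_lt_ofReal_iff (by norm_num)]; norm_num
  have hEV : ∀ᶠ k in atTop, ENNReal.ofReal (15/8) < volume (V k) := by
    have := tendsto_measure_iUnion_atTop (μ := volume) hVmono
    rw [hVU, hIcc2] at this
    exact this.eventually (eventually_gt_nhds hlt)
  have hEW : ∀ᶠ k in atTop, ENNReal.ofReal (15/8) < volume (W k) := by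
    have := tendsto_measure_iUnion_atTop (μ := volume) hWmono
    rw [hWU, hIcc2] at this
    exact this.eventually (eventually_gt_nhds hlt)
  obtain ⟨k, hVk, hWk⟩ := (hEV.and hEW).exists
  have hDV : volume (Icc (0:ℝ) 2 \ V k) ≤ ENNReal.ofReal (1/8) := by
    rw [measure_diff inter_subset_left (hVmeas k).nullMeasurableSet (((measure_mono (inter_subset_left)).trans_lt (by rw [hIcc2]; exact ENNReal.ofReal_lt_top)).ne), hIcc2]
    calc ENNReal.ofReal 2 - volume (V k) ≤ ENNReal.ofReal 2 - ENNReal.ofReal (15/8) :=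
          tsub_le_tsub_left hVk.le _
      _ = ENNReal.ofReal (1/8) := by
          rw [← ENNReal.ofReal_sub _ (by norm_num)]; norm_num
  have hDW : volume (Icc (0:ℝ) 2 \ W k) ≤ ENNReal.ofReal (1/8) := by
    rw [measure_diff inter_subset_left (hWmeas k).nullMeasurableSet (((measure_mono (inter_subset_left)).trans_lt (by rw [hIcc2]; exact ENNReal.ofReal_lt_top)).ne), hIcc2]
    calc ENNReal.ofReal 2 - volume (W k) ≤ ENNReal.ofReal 2 - ENNReal.ofReal (15/8) :=
          tsub_le_tsub_left hWk.le _
      _ = ENNReal.ofReal (1/8) := by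
          rw [← ENNReal.ofReal_sub _ (by norm_num)]; norm_num
  -- find s in both
  have key : ∃ s, s ∈ V k ∧ s - u k ∈ W k := by
    by_contra hc
    push_neg at hc
    have hcover : Icc (u k) 2 ⊆ (Icc (0:ℝ) 2 \ V k) ∪
        ((fun r => r - u k) ⁻¹' (Icc (0:ℝ) 2 \ W k)) := by
      intro r hr
      have hr0 : (0:ℝ) ≤ r := le_trans (hu0 k) hr.1
      by_cases hrV : r ∈ V k
      · right
        show r - u k ∈ Icc (0:ℝ) 2 \ W k
        refine ⟨⟨by linarith [hr.1], by linarith [hr.2, hu0 k]⟩, hc r hrV⟩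
      · left; exact ⟨⟨hr0, hr.2⟩, hrV⟩
    have hvol : volume (Icc (u k) 2) ≤ ENNReal.ofReal (1/8) + ENNReal.ofReal (1/8) := by
      refine le_trans (measure_mono hcover) (le_trans (measure_union_le _ _) ?_)
      have hpre : volume ((fun r => r - u k) ⁻¹' (Icc (0:ℝ) 2 \ W k)) =
          volume (Icc (0:ℝ) 2 \ W k) := by
        have : (fun r : ℝ => r - u k) = fun r => r + (-u k) := by
          funext r; ring
        rw [this, measure_preimage_add_right]
      rw [hpre]
      exact add_le_add hDV hDW
    rw [Real.volume_Icc, ← ENNReal.ofReal_add (by norm_num) (by norm_num)] at hvol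
    have := (ENNReal.ofReal_le_ofReal_iff (by norm_num)).mp hvol
    linarith [hu1 k]
  obtain ⟨s, hsV, hsW⟩ := key
  have hs1 : |H (τ k + s) - H (τ k) - η * s| ≤ ε/4 :=
    (mem_iInter₂.mp hsV.2) k le_rfl
  have hs2 : |H (τ k + u k + (s - u k)) - H (τ k + u k) - η * (s - u k)| ≤ ε/4 :=
    (mem_iInter₂.mp hsW.2) k le_rfl
  have heq : τ k + u k + (s - u k) = τ k + s := by ring
  rw [heq] at hs2
  have hiden : H (τ k + u k) - H (τ k) - η * u k =
      (H (τ k + s) - H (τ k) - η * s) - (H (τ k + s) - H (τ k + u k) - η * (s - u k)) := by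
    ring
  have := hbad k
  rw [hiden] at this
  have htri := abs_sub (H (τ k + s) - H (τ k) - η * s)
      (H (τ k + s) - H (τ k + u k) - η * (s - u k))
  linarith

theorem potter (η : ℝ) (γ : ℝ → ℝ) (hγmeas : Measurable γ)
    (hγpos : ∀ t ≥ (0:ℝ), 0 < γ t)
    (hγRV : ∀ l > (0 : ℝ), Tendsto (fun t => γ (l * t) / γ t) atTop (nhds (l ^ η))) :
    ∃ T ≥ (1:ℝ), ∀ s t : ℝ, T ≤ s → s ≤ t →
      γ s ≤ Real.exp 1 * Real.exp ((t - s)/2) * γ t := by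
  set H : ℝ → ℝ := fun τ => Real.log (γ (Real.exp τ)) with hHdef
  have hH : Measurable H := Real.measurable_log.comp (hγmeas.comp Real.measurable_exp)
  have hlim := lemA η γ hγpos hγRV
  obtain ⟨T₀, hT₀⟩ := myUCT η H hH hlim (1/2) (by norm_num)
  have step : ∀ σ ≥ T₀, ∀ d, 0 ≤ d → d ≤ 1 → H σ - H (σ + d) ≤ |η| * d + 1/2 := by
    intro σ hσ d hd0 hd1
    have h1 := hT₀ σ hσ d hd0 hd1
    have h2 : -(η * d) ≤ |η| * d := by
      have := mul_le_mul_of_nonneg_right (neg_le_abs η) hd0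
      linarith
    have h3 := abs_le.mp h1
    linarith [h3.1]
  have chain : ∀ n : ℕ, ∀ σ, T₀ ≤ σ → ∀ d, 0 ≤ d → d ≤ (n:ℝ) + 1 →
      H σ - H (σ + d) ≤ (|η| + 1) * d + 1 := by
    intro n
    induction n with
    | zero =>
      intro σ hσ d hd0 hd1
      have := step σ hσ d hd0 (by simpa using hd1)
      nlinarith [abs_nonneg η]
    | succ n ih =>
      intro σ hσ d hd0 hdn
      by_cases hd1 : d ≤ 1
      · have := step σ hσ d hd0 hd1
        nlinarith [abs_nonneg η]
      · push_neg at hd1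
        have h1 := step σ hσ 1 zero_le_one le_rfl
        have h2 := ih (σ + 1) (by linarith) (d - 1) (by linarith)
          (by push_cast at hdn ⊢; linarith)
        have heq : σ + 1 + (d - 1) = σ + d := by ring
        rw [heq] at h2
        nlinarith [abs_nonneg η]
  refine ⟨max (Real.exp T₀) (2 * (|η| + 1)), le_max_of_le_right (by nlinarith [abs_nonneg η]),
    fun s t hTs hst => ?_⟩
  have hs0 : (0:ℝ) < s := lt_of_lt_of_le (by positivity) (le_trans (le_max_right _ _) hTs)
  have ht0 : (0:ℝ) < t := lt_of_lt_of_le hs0 hst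
  set σ := Real.log s with hσdef
  set τ := Real.log t with hτdef
  have hσT : T₀ ≤ σ := (Real.le_log_iff_exp_le hs0).mpr (le_trans (le_max_left _ _) hTs)
  have hd0 : 0 ≤ τ - σ := by
    have := Real.log_le_log hs0 hst
    linarith
  have hdb : τ - σ ≤ (t - s) / (2 * (|η| + 1)) := by
    have h1 : τ - σ = Real.log (t / s) := by
      rw [Real.log_div ht0.ne' hs0.ne']
    have h2 : Real.log (t / s) ≤ t / s - 1 := Real.log_le_sub_one_of_pos (by positivity)
    have h3 : t / s - 1 = (t - s) / s := by field_simp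
    have h4 : (t - s) / s ≤ (t - s) / (2 * (|η| + 1)) := by
      exact div_le_div_of_nonneg_left (by linarith) (by positivity)
        (le_trans (le_max_right _ _) hTs)
    linarith
  obtain ⟨n, hn⟩ := exists_nat_ge (τ - σ)
  have hch := chain n σ hσT (τ - σ) hd0 (by linarith)
  have heq2 : σ + (τ - σ) = τ := by ring
  rw [heq2] at hch
  have hbound : H σ - H τ ≤ (t - s)/2 + 1 := by
    have habs : 0 < |η| + 1 := by positivity
    have := mul_le_mul_of_nonneg_left hdb habs.le
    have h5 : (|η| + 1) * ((t - s) / (2 * (|η| + 1))) = (t - s)/2 := by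
      field_simp
    linarith
  have hγs : γ s = Real.exp (H σ) := by
    rw [hHdef]; simp only []
    rw [Real.exp_log hs0, Real.exp_log (hγpos s hs0.le)]
  have hγt : γ t = Real.exp (H τ) := by
    rw [hHdef]; simp only []
    rw [Real.exp_log ht0, Real.exp_log (hγpos t ht0.le)]
  rw [hγs, hγt]
  calc Real.exp (H σ) = Real.exp (H σ - H τ) * Real.exp (H τ) := by
        rw [← Real.exp_add, sub_add_cancel]
    _ ≤ Real.exp ((t - s)/2 + 1) * Real.exp (H τ) := by
        apply mul_le_mul_of_nonneg_right (Real.exp_le_exp.mpr hbound) (Real.exp_pos _).le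
    _ = Real.exp 1 * Real.exp ((t - s)/2) * Real.exp (H τ) := by
        rw [← Real.exp_add, ← Real.exp_add, ← Real.exp_add]; congr 1; ring

theorem reprId (q a b ζ : ℝ) (hq0 : 0 < q) (f x y : ℝ → ℝ)
    (hf : ContinuousOn f (Set.Ici 0))
    (hxc : ContinuousOn x (Set.Ici 0))
    (hx0 : x 0 = ζ)
    (hx : ∀ t > 0, HasDerivAt x (a * x (q * t) + b * x t + f t) t)
    (hy : ∀ t, y t = ∫ s in (0 : ℝ)..t, Real.exp (-(t - s)) * f s) :
    ∀ t ≥ (0:ℝ), y t = x t - ζ * Real.exp (-t)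
      - (1+b) * (∫ s in (0:ℝ)..t, Real.exp (-(t-s)) * x s)
      - a * (∫ s in (0:ℝ)..t, Real.exp (-(t-s)) * x (q*s)) := by
  intro t ht
  have hq : ∀ s : ℝ, 0 ≤ s → (0:ℝ) ≤ q * s := fun s hs => by positivity
  have hIcc : Set.uIcc (0:ℝ) t = Set.Icc 0 t := Set.uIcc_of_le ht
  have hxqc : ContinuousOn (fun s => x (q * s)) (Set.Ici 0) := by
    apply hxc.comp (continuous_const.mul continuous_id).continuousOn
    intro s hs; exact hq s hs
  -- continuity of the pieces on Icc 0 t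
  have csub : Set.Icc (0:ℝ) t ⊆ Set.Ici 0 := fun s hs => hs.1
  have c1 : ContinuousOn (fun s => Real.exp s * x s) (Set.Icc 0 t) :=
    Real.continuous_exp.continuousOn.mul (hxc.mono csub)
  have c2 : ContinuousOn (fun s => Real.exp s * x (q*s)) (Set.Icc 0 t) :=
    Real.continuous_exp.continuousOn.mul (hxqc.mono csub)
  have c3 : ContinuousOn (fun s => Real.exp s * f s) (Set.Icc 0 t) :=
    Real.continuous_exp.continuousOn.mul (hf.mono csub)
  have i1 : IntervalIntegrable (fun s => Real.exp s * x s) volume 0 t :=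
    (c1.mono (by rw [hIcc])).intervalIntegrable
  have i2 : IntervalIntegrable (fun s => Real.exp s * x (q*s)) volume 0 t :=
    (c2.mono (by rw [hIcc])).intervalIntegrable
  have i3 : IntervalIntegrable (fun s => Real.exp s * f s) volume 0 t :=
    (c3.mono (by rw [hIcc])).intervalIntegrable
  -- FTC
  have hFTC : (∫ s in (0:ℝ)..t, Real.exp s * ((1+b) * x s + a * x (q*s) + f s))
      = Real.exp t * x t - ζ := by
    have hder : ∀ s ∈ Set.Ioo 0 t, HasDerivWithinAt (fun s => Real.exp s * x s)
        (Real.exp s * ((1+b) * x s + a * x (q*s) + f s)) (Set.Ioi s) s := by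
      intro s hs
      have h1 := (Real.hasDerivAt_exp s).mul (hx s hs.1)
      have h2 : Real.exp s * x s + Real.exp s * (a * x (q*s) + b * x s + f s)
          = Real.exp s * ((1+b) * x s + a * x (q*s) + f s) := by ring
      rw [h2] at h1
      exact h1.hasDerivWithinAt
    have hint : IntervalIntegrable
        (fun s => Real.exp s * ((1+b) * x s + a * x (q*s) + f s)) volume 0 t := by
      apply ContinuousOn.intervalIntegrable
      rw [hIcc]
      exact Real.continuous_exp.continuousOn.mul
        ((((hxc.mono csub).const_smul (1+b)).add ((hxqc.mono csub).const_smul a)).add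
          (hf.mono csub))
    have := intervalIntegral.integral_eq_sub_of_hasDeriv_right_of_le ht
      (Real.continuous_exp.continuousOn.mul (hxc.mono csub)) hder hint
    rw [this]; simp only [Pi.mul_apply]; rw [Real.exp_zero, hx0]; ring
  -- split the integral
  have hsplit : (∫ s in (0:ℝ)..t, Real.exp s * ((1+b) * x s + a * x (q*s) + f s))
      = (1+b) * (∫ s in (0:ℝ)..t, Real.exp s * x s)
        + a * (∫ s in (0:ℝ)..t, Real.exp s * x (q*s))
        + ∫ s in (0:ℝ)..t, Real.exp s * f s := by
    have heq : (fun s => Real.exp s * ((1+b) * x s + a * x (q*s) + f s))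
        = fun s => ((1+b) * (Real.exp s * x s) + a * (Real.exp s * x (q*s)))
          + Real.exp s * f s := by funext s; ring
    rw [heq, intervalIntegral.integral_add ((i1.const_mul _).add (i2.const_mul _)) i3,
      intervalIntegral.integral_add (i1.const_mul _) (i2.const_mul _),
      intervalIntegral.integral_const_mul, intervalIntegral.integral_const_mul]
  -- convert exp (-(t-s)) integrals
  have hconv : ∀ g : ℝ → ℝ, (∫ s in (0:ℝ)..t, Real.exp (-(t-s)) * g s)
      = Real.exp (-t) * ∫ s in (0:ℝ)..t, Real.exp s * g s := by
    intro g
    rw [← intervalIntegral.integral_const_mul]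
    apply intervalIntegral.integral_congr
    intro s _
    show Real.exp (-(t-s)) * g s = Real.exp (-t) * (Real.exp s * g s)
    rw [show -(t-s) = -t + s by ring, Real.exp_add, mul_assoc]
  have hy' := hy t
  rw [hconv f] at hy'
  have key : Real.exp (-t) * (∫ s in (0:ℝ)..t, Real.exp s * ((1+b) * x s + a * x (q*s) + f s))
      = Real.exp (-t) * (Real.exp t * x t - ζ) := by rw [hFTC]
  rw [hsplit] at key
  have hexp : Real.exp (-t) * (Real.exp t * x t - ζ) = x t - ζ * Real.exp (-t) := by
    rw [mul_sub, ← mul_assoc, ← Real.exp_add]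
    simp [add_comm]
    ring
  rw [hexp] at key
  rw [hconv x, hconv (fun s => x (q*s))]
  have e1 := hconv x
  nlinarith [key, hy']

theorem convBound (γ : ℝ → ℝ) (hγpos : ∀ t ≥ (0:ℝ), 0 < γ t)
    (C T₁ : ℝ) (hC : 0 < C) (hT₁ : 1 ≤ T₁)
    (hP : ∀ s t : ℝ, T₁ ≤ s → s ≤ t → γ s ≤ C * Real.exp ((t - s)/2) * γ t)
    (g : ℝ → ℝ) (hg : ContinuousOn g (Set.Ici 0))
    (K T₂ : ℝ) (hK : 0 ≤ K) (hT₂ : T₁ ≤ T₂)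
    (hgK : ∀ s ≥ T₂, |g s| ≤ K * γ s) :
    ∃ M : ℝ, 0 ≤ M ∧ ∀ t ≥ T₂, |∫ s in (0:ℝ)..t, Real.exp (-(t-s)) * g s| ≤
      2*C*K*γ t + M * Real.exp (-(t - T₂)) := by
  have hT₂0 : (0:ℝ) < T₂ := lt_of_lt_of_le one_pos (le_trans hT₁ hT₂)
  obtain ⟨M₀, hM₀⟩ := isCompact_Icc.exists_bound_of_continuousOn
    (hg.mono (fun s (hs : s ∈ Set.Icc (0:ℝ) T₂) => hs.1))
  set M₀' := max M₀ 0 with hM₀'def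
  refine ⟨T₂ * M₀', by positivity, fun t ht => ?_⟩
  have ht0 : (0:ℝ) ≤ t := le_trans hT₂0.le ht
  have hγt : 0 < γ t := hγpos t ht0
  have hcont : ContinuousOn (fun s => Real.exp (-(t-s)) * g s) (Set.Ici 0) :=
    (Real.continuous_exp.comp ((continuous_const.sub continuous_id).neg)).continuousOn.mul hg
  have hia : IntervalIntegrable (fun s => Real.exp (-(t-s)) * g s) volume 0 T₂ := by
    apply (hcont.mono ?_).intervalIntegrable
    rw [Set.uIcc_of_le hT₂0.le]; exact fun s hs => hs.1
  have hib : IntervalIntegrable (fun s => Real.exp (-(t-s)) * g s) volume T₂ t := by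
    apply (hcont.mono ?_).intervalIntegrable
    rw [Set.uIcc_of_le ht]; exact fun s hs => le_trans hT₂0.le hs.1
  have habs : ContinuousOn (fun s => |Real.exp (-(t-s)) * g s|) (Set.Ici 0) := hcont.abs
  rw [← intervalIntegral.integral_add_adjacent_intervals hia hib]
  refine le_trans (abs_add_le _ _) ?_
  have partA : |∫ s in (0:ℝ)..T₂, Real.exp (-(t-s)) * g s| ≤
      T₂ * M₀' * Real.exp (-(t - T₂)) := by
    refine le_trans (intervalIntegral.abs_integral_le_integral_abs hT₂0.le) ?_
    have hmono : ∀ s ∈ Set.Icc (0:ℝ) T₂, |Real.exp (-(t-s)) * g s| ≤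
        Real.exp (-(t - T₂)) * M₀' := by
      intro s hs
      rw [abs_mul, abs_of_pos (Real.exp_pos _)]
      have h1 : Real.exp (-(t-s)) ≤ Real.exp (-(t-T₂)) :=
        Real.exp_le_exp.mpr (by linarith [hs.2])
      have h2 : |g s| ≤ M₀' := le_trans (hM₀ s hs) (le_max_left _ _)
      exact mul_le_mul h1 h2 (abs_nonneg _) (Real.exp_pos _).le
    calc (∫ s in (0:ℝ)..T₂, |Real.exp (-(t-s)) * g s|)
        ≤ ∫ _ in (0:ℝ)..T₂, Real.exp (-(t - T₂)) * M₀' := by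
          apply intervalIntegral.integral_mono_on hT₂0.le
          · apply (habs.mono ?_).intervalIntegrable
            rw [Set.uIcc_of_le hT₂0.le]; exact fun s hs => hs.1
          · exact intervalIntegrable_const
          · exact hmono
      _ = T₂ * M₀' * Real.exp (-(t - T₂)) := by
          rw [intervalIntegral.integral_const]; simp; ring
  have partB : |∫ s in T₂..t, Real.exp (-(t-s)) * g s| ≤ 2*C*K*γ t := by
    refine le_trans (intervalIntegral.abs_integral_le_integral_abs ht) ?_
    have hmono : ∀ s ∈ Set.Icc T₂ t, |Real.exp (-(t-s)) * g s| ≤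
        (C * K * γ t) * Real.exp ((s - t)/2) := by
      intro s hs
      have hs0 : (0:ℝ) ≤ s := le_trans hT₂0.le hs.1
      rw [abs_mul, abs_of_pos (Real.exp_pos _)]
      have h1 : |g s| ≤ K * γ s := hgK s hs.1
      have h2 : γ s ≤ C * Real.exp ((t - s)/2) * γ t :=
        hP s t (le_trans hT₂ hs.1) hs.2
      have h3 : Real.exp (-(t-s)) * |g s| ≤ Real.exp (-(t-s)) * (K * (C * Real.exp ((t - s)/2) * γ t)) := by
        apply mul_le_mul_of_nonneg_left _ (Real.exp_pos _).le
        exact le_trans h1 (mul_le_mul_of_nonneg_left h2 hK)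
      refine le_trans h3 (le_of_eq ?_)
      rw [show (s-t)/2 = -(t-s) + (t-s)/2 by ring, Real.exp_add]
      ring
    have hexpint : (∫ s in T₂..t, Real.exp ((s - t)/2)) = 2 - 2 * Real.exp ((T₂ - t)/2) := by
      have hder : ∀ s ∈ Set.uIcc T₂ t, HasDerivAt (fun r => 2 * Real.exp ((r - t)/2))
          (Real.exp ((s - t)/2)) s := by
        intro s _
        have h := ((((hasDerivAt_id s).sub_const t).div_const 2).exp).const_mul 2
        simp only [id_eq] at h
        exact h.congr_deriv (by ring)
      have hint : IntervalIntegrable (fun s => Real.exp ((s - t)/2)) volume T₂ t :=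
        (Real.continuous_exp.comp ((continuous_id.sub continuous_const).div_const 2)).intervalIntegrable _ _
      rw [intervalIntegral.integral_eq_sub_of_hasDerivAt hder hint]
      simp
    calc (∫ s in T₂..t, |Real.exp (-(t-s)) * g s|)
        ≤ ∫ s in T₂..t, (C * K * γ t) * Real.exp ((s - t)/2) := by
          apply intervalIntegral.integral_mono_on ht
          · apply (habs.mono ?_).intervalIntegrable
            rw [Set.uIcc_of_le ht]; exact fun s hs => le_trans hT₂0.le hs.1
          · exact (Continuous.intervalIntegrable (by continuity) _ _)
          · exact hmono
      _ = (C * K * γ t) * (2 - 2 * Real.exp ((T₂ - t)/2)) := by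
          rw [intervalIntegral.integral_const_mul, hexpint]
      _ ≤ 2*C*K*γ t := by
          have h4 : 0 ≤ C * K * γ t := by positivity
          nlinarith [Real.exp_pos ((T₂ - t)/2)]
  linarith

theorem junkSmall (γ : ℝ → ℝ) (hγpos : ∀ t ≥ (0:ℝ), 0 < γ t)
    (C T₁ : ℝ) (hC : 0 < C) (hT₁ : 1 ≤ T₁)
    (hP : ∀ s t : ℝ, T₁ ≤ s → s ≤ t → γ s ≤ C * Real.exp ((t - s)/2) * γ t)
    (c K' : ℝ) (hK' : 0 < K') :
    ∀ᶠ t in atTop, Real.exp (-(t-c)) ≤ K' * γ t := by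
  have hγT₁ : 0 < γ T₁ := hγpos T₁ (by linarith)
  have hlin : Tendsto (fun t : ℝ => Real.log C + c - T₁/2 - t/2) atTop atBot := by
    have h1 : Tendsto (fun t : ℝ => t/2) atTop atTop :=
      tendsto_id.atTop_div_const (by norm_num)
    have h2 : Tendsto (fun t : ℝ => -(t/2)) atTop atBot := tendsto_neg_atBot_iff.mpr h1
    have := tendsto_atBot_add_const_left atTop (Real.log C + c - T₁/2) h2
    refine this.congr fun t => by ring
  have hexp : Tendsto (fun t => Real.exp (Real.log C + c - T₁/2 - t/2)) atTop (nhds 0) :=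
    Real.tendsto_exp_atBot.comp hlin
  have hev := hexp.eventually (eventually_lt_nhds (show (0:ℝ) < K' * γ T₁ by positivity))
  filter_upwards [hev, eventually_ge_atTop T₁] with t h1 h2
  have hγt : 0 < γ t := hγpos t (by linarith)
  have hPt : γ T₁ ≤ C * Real.exp ((t - T₁)/2) * γ t := hP T₁ t le_rfl h2
  have hfac : (0:ℝ) < C * Real.exp ((t - T₁)/2) := by positivity
  have key : Real.exp (-(t-c)) * (C * Real.exp ((t - T₁)/2)) ≤
      K' * γ t * (C * Real.exp ((t - T₁)/2)) := by
    have hl : Real.exp (-(t-c)) * (C * Real.exp ((t - T₁)/2)) =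
        Real.exp (Real.log C + c - T₁/2 - t/2) := by
      rw [show Real.log C + c - T₁/2 - t/2 = Real.log C + (-(t-c) + (t - T₁)/2) by ring,
        Real.exp_add, Real.exp_add, Real.exp_log hC]
      ring
    rw [hl]
    calc Real.exp (Real.log C + c - T₁/2 - t/2) ≤ K' * γ T₁ := h1.le
      _ ≤ K' * (C * Real.exp ((t - T₁)/2) * γ t) :=
          mul_le_mul_of_nonneg_left hPt hK'.le
      _ = K' * γ t * (C * Real.exp ((t - T₁)/2)) := by ring
  exact le_of_mul_le_mul_right key hfac

/-- Converse estimates: for `γ` regularly varying, if `x(t) = O(γ(t))` then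
`y(t) = O(γ(t))`, and if `x(t) = o(γ(t))` then `y(t) = o(γ(t))`. -/
theorem pantograph_converse_estimates
    (q a b η ζ : ℝ)
    (hq0 : 0 < q) (hq1 : q < 1)
    (ha : a ≠ 0) (hb : b < 0) (hab : |a| < |b|)
    (f x y γ : ℝ → ℝ)
    (hf : ContinuousOn f (Set.Ici 0))
    (hxc : ContinuousOn x (Set.Ici 0))
    (hx0 : x 0 = ζ)
    (hx : ∀ t > 0, HasDerivAt x (a * x (q * t) + b * x t + f t) t)
    (hy : ∀ t, y t = ∫ s in (0 : ℝ)..t, Real.exp (-(t - s)) * f s)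
    (hγmeas : Measurable γ)
    (hγpos : ∀ t ≥ (0 : ℝ), 0 < γ t)
    (hγRV : ∀ l > (0 : ℝ), Tendsto (fun t => γ (l * t) / γ t) atTop (nhds (l ^ η))) :
    ((∃ T > (0 : ℝ), ∃ K > (0 : ℝ), ∀ t ≥ T, |x t| ≤ K * γ t) →
      (∃ T > (0 : ℝ), ∃ K > (0 : ℝ), ∀ t ≥ T, |y t| ≤ K * γ t)) ∧
    (Tendsto (fun t => x t / γ t) atTop (nhds 0) →
      Tendsto (fun t => y t / γ t) atTop (nhds 0)) := by
  obtain ⟨T₁, hT₁, hP⟩ := potter η γ hγmeas hγpos hγRV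
  have hC : (0:ℝ) < Real.exp 1 := Real.exp_pos 1
  -- ratio bound for the q-dilation
  have hLq : (0:ℝ) < q ^ η := Real.rpow_pos_of_pos hq0 η
  set Kq : ℝ := q ^ η + 1 with hKqdef
  have hKq : 0 < Kq := by positivity
  have hqev : ∀ᶠ t in atTop, γ (q * t) ≤ Kq * γ t := by
    have h0 := (hγRV q hq0).eventually (eventually_lt_nhds (show q ^ η < Kq by
      rw [hKqdef]; linarith))
    filter_upwards [h0, eventually_ge_atTop (0:ℝ)] with t h1 h2
    have hγt := hγpos t h2
    have h3 : γ (q*t)/γ t ≤ Kq := h1.le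
    calc γ (q*t) = (γ (q*t)/γ t) * γ t := by field_simp
      _ ≤ Kq * γ t := mul_le_mul_of_nonneg_right h3 hγt.le
  obtain ⟨Tq, hTq⟩ := eventually_atTop.mp hqev
  have hxqc : ContinuousOn (fun s => x (q * s)) (Set.Ici 0) := by
    apply hxc.comp (continuous_const.mul continuous_id).continuousOn
    intro s hs
    have : (0:ℝ) ≤ s := hs
    exact mul_nonneg hq0.le this
  set c₀ : ℝ := 4 + |1+b| * (2*Real.exp 1) + |a| * (2*Real.exp 1*Kq) with hc₀def
  have hc₀ : 0 < c₀ := by positivity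
  -- master eventual bound
  have master : ∀ K > (0:ℝ), ∀ T : ℝ, (∀ t ≥ T, |x t| ≤ K * γ t) →
      ∀ᶠ t in atTop, |y t| ≤ c₀ * K * γ t := by
    intro K hK T hxK
    set T₂ := max T T₁ with hT₂def
    obtain ⟨M₁, hM₁0, hM₁⟩ := convBound γ hγpos (Real.exp 1) T₁ hC hT₁ hP x hxc K T₂
      hK.le (le_max_right _ _) (fun s hs => hxK s (le_trans (le_max_left _ _) hs))
    set T₃ := max (max (T/q) Tq) T₁ with hT₃def
    have hgK2 : ∀ s ≥ T₃, |x (q*s)| ≤ (K * Kq) * γ s := by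
      intro s hs
      have hs1 : T/q ≤ s := le_trans (le_trans (le_max_left _ _) (le_max_left _ _)) hs
      have hs2 : Tq ≤ s := le_trans (le_trans (le_max_right _ _) (le_max_left _ _)) hs
      have hqs : T ≤ q * s := by
        rw [mul_comm]; exact (div_le_iff₀ hq0).mp hs1
      have h1 : |x (q*s)| ≤ K * γ (q*s) := hxK _ hqs
      have h2 : γ (q*s) ≤ Kq * γ s := hTq s hs2
      calc |x (q*s)| ≤ K * γ (q*s) := h1
        _ ≤ K * (Kq * γ s) := mul_le_mul_of_nonneg_left h2 hK.le
        _ = (K * Kq) * γ s := by ring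
    obtain ⟨M₂, hM₂0, hM₂⟩ := convBound γ hγpos (Real.exp 1) T₁ hC hT₁ hP
      (fun s => x (q*s)) hxqc (K*Kq) T₃ (by positivity) (le_max_right _ _) hgK2
    -- junk terms
    have eJ1 : ∀ᶠ t in atTop, |ζ| * Real.exp (-(t - 0)) ≤ K * γ t := by
      filter_upwards [junkSmall γ hγpos (Real.exp 1) T₁ hC hT₁ hP 0 (K/(|ζ|+1))
        (by positivity), eventually_ge_atTop (0:ℝ)] with t h1 h2
      have hγt := hγpos t h2
      calc |ζ| * Real.exp (-(t-0)) ≤ |ζ| * (K/(|ζ|+1) * γ t) :=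
            mul_le_mul_of_nonneg_left h1 (abs_nonneg ζ)
        _ ≤ K * γ t := by
            rw [div_mul_eq_mul_div, mul_div_assoc']
            rw [div_le_iff₀ (show (0:ℝ) < |ζ|+1 by positivity)]
            nlinarith [abs_nonneg ζ, hγt.le]
    have eJ2 : ∀ᶠ t in atTop, |1+b| * (M₁ * Real.exp (-(t - T₂))) ≤ K * γ t := by
      filter_upwards [junkSmall γ hγpos (Real.exp 1) T₁ hC hT₁ hP T₂
        (K/(|1+b| * M₁+1)) (by positivity), eventually_ge_atTop (0:ℝ)] with t h1 h2
      have hγt := hγpos t h2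
      calc |1+b| * (M₁ * Real.exp (-(t-T₂))) ≤ |1+b| * (M₁ * (K/(|1+b| * M₁+1) * γ t)) := by
            apply mul_le_mul_of_nonneg_left _ (abs_nonneg _)
            exact mul_le_mul_of_nonneg_left h1 hM₁0
        _ ≤ K * γ t := by
            rw [div_mul_eq_mul_div, ← mul_div_assoc, ← mul_div_assoc]
            rw [div_le_iff₀ (show (0:ℝ) < |1+b| * M₁+1 by positivity)]
            nlinarith [abs_nonneg (1+b), hγt.le, mul_nonneg (abs_nonneg (1+b)) hM₁0]
    have eJ3 : ∀ᶠ t in atTop, |a| * (M₂ * Real.exp (-(t - T₃))) ≤ K * γ t := by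
      filter_upwards [junkSmall γ hγpos (Real.exp 1) T₁ hC hT₁ hP T₃
        (K/(|a| * M₂+1)) (by positivity), eventually_ge_atTop (0:ℝ)] with t h1 h2
      have hγt := hγpos t h2
      calc |a| * (M₂ * Real.exp (-(t-T₃))) ≤ |a| * (M₂ * (K/(|a| * M₂+1) * γ t)) := by
            apply mul_le_mul_of_nonneg_left _ (abs_nonneg _)
            exact mul_le_mul_of_nonneg_left h1 hM₂0
        _ ≤ K * γ t := by
            rw [div_mul_eq_mul_div, ← mul_div_assoc, ← mul_div_assoc]
            rw [div_le_iff₀ (show (0:ℝ) < |a| * M₂+1 by positivity)]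
            nlinarith [abs_nonneg a, hγt.le, mul_nonneg (abs_nonneg a) hM₂0]
    filter_upwards [eJ1, eJ2, eJ3, eventually_ge_atTop (max T₂ T₃),
      eventually_ge_atTop (0:ℝ)] with t h1 h2 h3 h4 h5
    have hγt := hγpos t h5
    have hyt := reprId q a b ζ hq0 f x y hf hxc hx0 hx hy t h5
    have htT₂ : t ≥ T₂ := le_trans (le_max_left _ _) h4
    have htT₃ : t ≥ T₃ := le_trans (le_max_right _ _) h4
    have b1 := hM₁ t htT₂
    have b2 := hM₂ t htT₃
    have bx := hxK t (le_trans (le_max_left _ _) htT₂)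
    rw [hyt]
    have m1 : |a * (∫ s in (0:ℝ)..t, Real.exp (-(t-s)) * x (q*s))| =
        |a| * |∫ s in (0:ℝ)..t, Real.exp (-(t-s)) * x (q*s)| := abs_mul _ _
    have m2 : |(1+b) * (∫ s in (0:ℝ)..t, Real.exp (-(t-s)) * x s)| =
        |1+b| * |∫ s in (0:ℝ)..t, Real.exp (-(t-s)) * x s| := abs_mul _ _
    have m3 : |ζ * Real.exp (-t)| = |ζ| * Real.exp (-t) := by
      rw [abs_mul, abs_of_pos (Real.exp_pos _)]
    have tA := abs_sub (x t - ζ * Real.exp (-t)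
      - (1+b) * (∫ s in (0:ℝ)..t, Real.exp (-(t-s)) * x s))
      (a * (∫ s in (0:ℝ)..t, Real.exp (-(t-s)) * x (q*s)))
    have tB := abs_sub (x t - ζ * Real.exp (-t))
      ((1+b) * (∫ s in (0:ℝ)..t, Real.exp (-(t-s)) * x s))
    have tC := abs_sub (x t) (ζ * Real.exp (-t))
    have h1' : |ζ| * Real.exp (-t) ≤ K * γ t := by
      have he : -(t - 0) = -t := by ring
      rw [he] at h1; exact h1
    have c1 : |1+b| * |∫ s in (0:ℝ)..t, Real.exp (-(t-s)) * x s| ≤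
        |1+b| * (2*Real.exp 1*K*γ t) + K * γ t := by
      have hh := mul_le_mul_of_nonneg_left b1 (abs_nonneg (1+b))
      rw [mul_add] at hh
      linarith
    have c2 : |a| * |∫ s in (0:ℝ)..t, Real.exp (-(t-s)) * x (q*s)| ≤
        |a| * (2*Real.exp 1*(K*Kq)*γ t) + K * γ t := by
      have hh := mul_le_mul_of_nonneg_left b2 (abs_nonneg a)
      rw [mul_add] at hh
      linarith
    have final : K * γ t + K * γ t
        + (|1+b| * (2*Real.exp 1*K*γ t) + K * γ t)
        + (|a| * (2*Real.exp 1*(K*Kq)*γ t) + K * γ t) = c₀ * K * γ t := by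
      rw [hc₀def]; ring
    linarith
  constructor
  · rintro ⟨T, hT0, K, hK0, hxb⟩
    obtain ⟨T', hT'⟩ := eventually_atTop.mp (master K hK0 T hxb)
    refine ⟨max T' 1, lt_of_lt_of_le one_pos (le_max_right _ _), c₀ * K,
      by positivity, fun t ht => hT' t (le_trans (le_max_left _ _) ht)⟩
  · intro hxo
    rw [NormedAddCommGroup.tendsto_nhds_zero] at hxo ⊢
    intro ε hε
    set K : ℝ := ε / (2 * c₀) with hKdef
    have hK : 0 < K := by positivity
    obtain ⟨T, hT⟩ := eventually_atTop.mp
      (((hxo K hK).and (eventually_ge_atTop (0:ℝ))))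
    have hxb : ∀ t ≥ T, |x t| ≤ K * γ t := by
      intro t ht
      obtain ⟨h1, h2⟩ := hT t ht
      have hγt := hγpos t h2
      rw [Real.norm_eq_abs, abs_div, abs_of_pos hγt, div_lt_iff₀ hγt] at h1
      linarith
    filter_upwards [master K hK T hxb, eventually_ge_atTop (0:ℝ)] with t h1 h2
    have hγt := hγpos t h2
    rw [Real.norm_eq_abs, abs_div, abs_of_pos hγt, div_lt_iff₀ hγt]
    have hcK : c₀ * K = ε/2 := by
      rw [hKdef]; field_simp
    rw [hcK] at h1
    nlinarith
end

section
/- Let d ≥ 1, q ∈ (0,1), and let A, B be real d×d matrices with A ≠ 0. Suppose there exists a real symmetric positive definite d×d matrix Q with Bᵀ·Q + Q·B = -I (the d×d identity), and, with c₁ and c₂ the smallest and largest eigenvalues of Q respectively, suppose 4·‖Q·A‖² < c₁/c₂, where ‖·‖ denotes the matrix operator norm induced by the Euclidean norm on ℝ^d. Then for every continuous φ : [0,∞) → ℝ^d with φ(t) → 0 as t → ∞, every continuous function Z : [0,∞) → ℝ^d, differentiable on (0,∞), satisfying Z'(t) = B·Z(t) + A·Z(q·t) + φ(t) for all t > 0,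 obeys Z(t) → 0 as t → ∞. -/
open Real Filter Set Matrix

lemma halanay_aux {q α β : ℝ} (hq0 : 0 < q) (hq1 : q < 1) (hα : 0 < α) (hβ : 0 ≤ β)
    (hβα : β < α) {V V' g : ℝ → ℝ}
    (hVc : ContinuousOn V (Ici 0)) (hV0 : ∀ t, 0 ≤ t → 0 ≤ V t)
    (hgc : ContinuousOn g (Ici 0)) (hg0 : ∀ t, 0 ≤ t → 0 ≤ g t)
    (hglim : Tendsto g atTop (nhds 0))
    (hdV : ∀ t, 0 < t → HasDerivAt V (V' t) t)
    (hineq : ∀ t, 0 < t → V' t ≤ -α * V t + β * V (q*t) + g t) :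
    Tendsto V atTop (nhds 0) := by
  -- g is bounded on [0,∞)
  obtain ⟨T₁, hT₁⟩ : ∃ T₁ : ℝ, ∀ t ≥ T₁, g t < 1 :=
    (hglim.eventually (Iio_mem_nhds one_pos)).exists_forall_of_atTop
  obtain ⟨K₀, hK₀⟩ := (isCompact_Icc (a := (0:ℝ)) (b := max T₁ 0)).exists_bound_of_continuousOn
    (hgc.mono (fun x hx => hx.1))
  set K : ℝ := max (K₀ + 1) 1 with hKdef
  have hK1 : 1 ≤ K := le_max_right _ _
  have hKpos : 0 < K := lt_of_lt_of_le one_pos hK1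
  have hgK : ∀ t, 0 ≤ t → g t ≤ K := by
    intro t ht
    rcases le_or_gt t (max T₁ 0) with h | h
    · calc g t ≤ |g t| := le_abs_self _
        _ ≤ K₀ := hK₀ t ⟨ht, h⟩
        _ ≤ K := le_trans (by linarith) (le_max_left _ _)
    · exact le_trans (hT₁ t (le_of_lt (lt_of_le_of_lt (le_max_left _ _) h))).le hK1
  have hαβ : 0 < α - β := by linarith
  set C : ℝ := max (V 0) (K / (α - β)) with hCdef
  -- Step A: boundedness
  have hbound : ∀ t, 0 ≤ t → V t ≤ C := by
    intro t ht
    set T : ℝ := max t 1 with hTdef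
    have hT0 : 0 < T := lt_of_lt_of_le one_pos (le_max_right _ _)
    have hVcT : ContinuousOn V (Icc 0 T) := hVc.mono (fun x hx => hx.1)
    obtain ⟨x₀, hx₀s, hx₀max⟩ := (isCompact_Icc (a := (0:ℝ)) (b := T)).exists_isMaxOn
      ⟨0, le_refl _, hT0.le⟩ hVcT
    have htmem : t ∈ Icc 0 T := ⟨ht, le_max_left _ _⟩
    have hmax : ∀ y ∈ Icc 0 T, V y ≤ V x₀ := fun y hy => hx₀max hy
    have hVt : V t ≤ V x₀ := hmax t htmem
    by_contra hcon
    push_neg at hcon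
    have hC' : C < V x₀ := lt_of_lt_of_le hcon hVt
    set S : Set ℝ := Icc 0 T ∩ V ⁻¹' {V x₀} with hSdef
    have hSclosed : IsClosed S :=
      hVcT.preimage_isClosed_of_isClosed isClosed_Icc isClosed_singleton
    have hSne : S.Nonempty := ⟨x₀, hx₀s, rfl⟩
    have hSbdd : BddBelow S := ⟨0, fun x hx => hx.1.1⟩
    set t₀ : ℝ := sInf S with ht₀def
    have ht₀S : t₀ ∈ S := hSclosed.csInf_mem hSne hSbdd
    have ht₀mem : t₀ ∈ Icc 0 T := ht₀S.1
    have ht₀V : V t₀ = V x₀ := ht₀S.2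
    have ht₀pos : 0 < t₀ := by
      rcases eq_or_lt_of_le ht₀mem.1 with h | h
      · exfalso
        have : V 0 ≤ C := le_max_left _ _
        rw [← h] at ht₀V
        linarith
      · exact h
    -- before t₀, V < V x₀
    have hlt : ∀ s, s ∈ Ioo 0 t₀ → V s < V x₀ := by
      intro s hs
      have hsmem : s ∈ Icc 0 T := ⟨hs.1.le, le_trans hs.2.le ht₀mem.2⟩
      rcases lt_or_eq_of_le (hmax s hsmem) with h | h
      · exact h
      · exfalso
        have : t₀ ≤ s := csInf_le hSbdd ⟨hsmem, h⟩
        exact absurd hs.2 (not_lt.2 this)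
    -- derivative at t₀ is nonnegative
    have hD := hdV t₀ ht₀pos
    have hslope : Tendsto (slope V t₀) (nhdsWithin t₀ (Ioo 0 t₀)) (nhds (V' t₀)) := by
      have := (hasDerivAt_iff_tendsto_slope).1 hD
      exact this.mono_left (nhdsWithin_mono _ (fun x hx => by simpa using ne_of_lt hx.2))
    have hne : (nhdsWithin t₀ (Ioo 0 t₀)).NeBot := by
      apply mem_closure_iff_nhdsWithin_neBot.1
      rw [closure_Ioo (ne_of_lt ht₀pos)]
      exact ⟨ht₀pos.le, le_refl _⟩
    have hD0 : 0 ≤ V' t₀ := by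
      refine ge_of_tendsto hslope ?_
      filter_upwards [self_mem_nhdsWithin] with s hs
      rw [slope_def_field]
      have h1 : V s < V t₀ := ht₀V ▸ hlt s hs
      have h2 : s < t₀ := hs.2
      exact le_of_lt (div_pos_of_neg_of_neg (by linarith) (by linarith))
    -- but the differential inequality forces it negative
    have hq₀mem : q * t₀ ∈ Icc 0 T :=
      ⟨mul_nonneg hq0.le ht₀pos.le, le_trans (by nlinarith) ht₀mem.2⟩
    have hVq : V (q * t₀) ≤ V x₀ := hmax _ hq₀mem
    have hKC : K ≤ (α - β) * C := by
      rw [hCdef]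
      calc K = (α - β) * (K / (α - β)) := by field_simp
        _ ≤ (α - β) * max (V 0) (K / (α - β)) := by
            apply mul_le_mul_of_nonneg_left (le_max_right _ _) hαβ.le
    have := hineq t₀ ht₀pos
    have hgle : g t₀ ≤ K := hgK t₀ ht₀pos.le
    nlinarith [hV0 (q*t₀) (mul_nonneg hq0.le ht₀pos.le)]
  -- Step B: limsup argument
  have hle_of_forall : ∀ a b : ℝ, (∀ ε : ℝ, 0 < ε → a ≤ b + ε) → a ≤ b := by
    intro a b h
    by_contra hc
    push_neg at hc
    have := h ((a - b)/2) (by linarith)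
    linarith
  have hCnn : 0 ≤ C := le_trans (hV0 0 le_rfl) (le_max_left _ _)
  have hbddU : IsBoundedUnder (· ≤ ·) atTop V :=
    ⟨C, eventually_map.mpr (by filter_upwards [eventually_ge_atTop (0:ℝ)] with t ht
                               exact hbound t ht)⟩
  have hbddL : IsBoundedUnder (· ≥ ·) atTop V :=
    ⟨0, eventually_map.mpr (by filter_upwards [eventually_ge_atTop (0:ℝ)] with t ht
                               exact hV0 t ht)⟩
  have hcob : IsCoboundedUnder (· ≤ ·) atTop V := hbddL.isCoboundedUnder_le
  set L : ℝ := limsup V atTop with hLdef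
  have hL0 : 0 ≤ L := by
    apply le_limsup_of_frequently_le _ hbddU
    apply Eventually.frequently
    filter_upwards [eventually_ge_atTop (0:ℝ)] with t ht
    exact hV0 t ht
  have hkey : ∀ ε : ℝ, 0 < ε → L ≤ (β * (L + ε) + ε) / α := by
    intro ε hε
    have h1 : ∀ᶠ t in atTop, V t < L + ε := eventually_lt_of_limsup_lt (by linarith) hbddU
    have hqt : Tendsto (fun t : ℝ => q * t) atTop atTop :=
      Tendsto.const_mul_atTop hq0 tendsto_id
    have h2 : ∀ᶠ t in atTop, V (q * t) < L + ε := hqt.eventually h1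
    have h3 : ∀ᶠ t in atTop, g t < ε := hglim.eventually (Iio_mem_nhds hε)
    obtain ⟨T, hT⟩ := (h2.and h3).exists_forall_of_atTop
    set T' : ℝ := max T 1 with hT'def
    have hT'0 : (0:ℝ) < T' := lt_of_lt_of_le one_pos (le_max_right _ _)
    set c : ℝ := β * (L + ε) + ε with hc
    have hcnn : 0 ≤ c := by
      have : 0 ≤ β * (L + ε) := mul_nonneg hβ (by linarith)
      linarith
    set W : ℝ → ℝ := fun s => exp (α*s) * (V s - c/α) with hWdef
    have hWd : ∀ x, T' < x →
        HasDerivAt W (exp (α*x)*α*(V x - c/α) + exp (α*x)*(V' x)) x := by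
      intro x hx
      have hx0 : 0 < x := lt_trans hT'0 hx
      have h1 : HasDerivAt (fun s : ℝ => exp (α*s)) (exp (α*x)*α) x := by
        simpa [Function.comp_def] using (Real.hasDerivAt_exp (α*x)).comp x ((hasDerivAt_id x).const_mul α)
      exact h1.mul ((hdV x hx0).sub_const (c/α))
    have hWanti : AntitoneOn W (Ici T') := by
      apply antitoneOn_of_deriv_nonpos (convex_Ici T')
      · apply ContinuousOn.mul
          (Continuous.continuousOn (Real.continuous_exp.comp (continuous_const.mul continuous_id)))
        exact ((hVc.mono (fun x hx => le_trans hT'0.le hx)).sub continuousOn_const)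
      · intro x hx
        rw [interior_Ici] at hx
        exact (hWd x hx).differentiableAt.differentiableWithinAt
      · intro x hx
        rw [interior_Ici] at hx
        rw [(hWd x hx).deriv]
        have hx0 : 0 < x := lt_trans hT'0 hx
        have hxT : T ≤ x := le_trans (le_max_left _ _) hx.le
        have hVq := (hT x hxT).1
        have hgx := (hT x hxT).2
        have hβq : β * V (q*x) ≤ β * (L + ε) := mul_le_mul_of_nonneg_left hVq.le hβ
        have hV'x : V' x ≤ -α * V x + c := by
          have := hineq x hx0
          rw [hc]; linarith
        have hα' : α * (V x - c/α) = α * V x - c := by field_simp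
        have : exp (α*x)*α*(V x - c/α) + exp (α*x)*(V' x)
            = exp (α*x) * (α * V x - c + V' x) := by rw [← hα']; ring
        rw [this]
        exact mul_nonpos_of_nonneg_of_nonpos (exp_pos _).le (by linarith)
    have hdecay : Tendsto (fun t : ℝ => exp (α*T') * (V T' - c/α) * exp (-(α*t)))
        atTop (nhds 0) := by
      have h1 : Tendsto (fun t : ℝ => -(α*t)) atTop atBot :=
        tendsto_neg_atBot_iff.mpr (Tendsto.const_mul_atTop hα tendsto_id)
      have h2 : Tendsto (fun t : ℝ => exp (-(α*t))) atTop (nhds 0) :=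
        Real.tendsto_exp_atBot.comp h1
      simpa using h2.const_mul (exp (α*T') * (V T' - c/α))
    have hVle : ∀ t, T' ≤ t → V t ≤ c/α + exp (α*T') * (V T' - c/α) * exp (-(α*t)) := by
      intro t htt
      have hWle : W t ≤ W T' := hWanti self_mem_Ici htt htt
      have hexp : (0:ℝ) < exp (α*t) := exp_pos _
      rw [hWdef] at hWle
      simp only at hWle
      have h2 : V t - c/α ≤ exp (α*T') * (V T' - c/α) * exp (-(α*t)) := by
        rw [Real.exp_neg, le_mul_inv_iff₀ hexp]
        nlinarith [hWle]
      linarith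
    have h4 : ∀ δ : ℝ, 0 < δ → L ≤ c/α + δ := by
      intro δ hδ
      have h6 : ∀ᶠ t in atTop, exp (α*T') * (V T' - c/α) * exp (-(α*t)) < δ :=
        hdecay.eventually (Iio_mem_nhds hδ)
      have h5 : ∀ᶠ t in atTop, V t ≤ c/α + δ := by
        filter_upwards [h6, eventually_ge_atTop T'] with t h6t hTt
        linarith [hVle t hTt]
      exact limsup_le_of_le hcob h5
    exact hle_of_forall _ _ h4
  have hLle : L ≤ 0 := by
    have h5 : ∀ ε : ℝ, 0 < ε → (α - β) * L ≤ 0 + (β + 1) * ε := by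
      intro ε hε
      have := hkey ε hε
      rw [div_eq_mul_inv, le_mul_inv_iff₀ hα] at this
      nlinarith
    have h6 : (α - β) * L ≤ 0 := by
      apply hle_of_forall _ _ (fun ε' hε' => ?_)
      have := h5 (ε' / (β + 1)) (by positivity)
      calc (α - β) * L ≤ 0 + (β+1) * (ε'/(β+1)) := this
        _ = 0 + ε' := by field_simp
    nlinarith
  have hLeq : L = 0 := le_antisymm hLle hL0
  refine tendsto_order.2 ⟨?_, ?_⟩
  · intro a ha
    filter_upwards [eventually_ge_atTop (0:ℝ)] with t ht
    exact lt_of_lt_of_le ha (hV0 t ht)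
  · intro a ha
    exact eventually_lt_of_limsup_lt (by rw [← hLdef, hLeq]; exact ha) hbddU

local notation "⟪" x ", " y "⟫" => inner (𝕜 := ℝ) x y

lemma quad_form_bounds (d : ℕ) (Q : Matrix (Fin d) (Fin d) ℝ) (hQsymm : Q.IsSymm)
    (c₁ c₂ : ℝ)
    (hextreme : ∀ μ : ℝ, (∃ v : Fin d → ℝ, v ≠ 0 ∧ Q.mulVec v = μ • v) →
      c₁ ≤ μ ∧ μ ≤ c₂) (x : EuclideanSpace ℝ (Fin d)) :
    c₁ * ‖x‖^2 ≤ ⟪x, Matrix.toEuclideanCLM (𝕜 := ℝ) Q x⟫ ∧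
      ⟪x, Matrix.toEuclideanCLM (𝕜 := ℝ) Q x⟫ ≤ c₂ * ‖x‖^2 := by
  set T := Matrix.toEuclideanCLM (𝕜 := ℝ) Q with hT
  have hstar : star Q = Q := by
    rw [Matrix.star_eq_conjTranspose, Matrix.conjTranspose_eq_transpose_of_trivial]
    exact hQsymm
  have hsa : IsSelfAdjoint T := by
    show star T = T
    rw [hT, ← map_star (Matrix.toEuclideanCLM (𝕜 := ℝ)) Q, hstar]
  have hsym : (T : EuclideanSpace ℝ (Fin d) →ₗ[ℝ] EuclideanSpace ℝ (Fin d)).IsSymmetric :=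
    hsa.isSymmetric
  have hn : Module.finrank ℝ (EuclideanSpace ℝ (Fin d)) = d := by
    simp [finrank_euclideanSpace]
  set b := hsym.eigenvectorBasis hn with hb
  set lam := hsym.eigenvalues hn with hlam
  have hlam_mem : ∀ i, c₁ ≤ lam i ∧ lam i ≤ c₂ := by
    intro i
    apply hextreme
    refine ⟨WithLp.equiv 2 _ (b i), ?_, ?_⟩
    · simp only [ne_eq]
      intro h
      have hb0 : (b i : EuclideanSpace ℝ (Fin d)) = 0 := by
        apply (WithLp.equiv 2 _).injective
        simpa using h
      have := b.orthonormal.1 i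
      rw [hb0] at this
      simp at this
    · have happ := hsym.apply_eigenvectorBasis hn i
      have h2 := congrArg (WithLp.equiv 2 (Fin d → ℝ)) happ
      simp only [ContinuousLinearMap.coe_coe, hT, WithLp.equiv_apply, Matrix.ofLp_toEuclideanCLM,
        Matrix.toLin'_apply, WithLp.ofLp_smul, RCLike.ofReal_real_eq_id, id_eq] at h2
      exact h2
  -- expansion of the quadratic form in the eigenbasis
  have hVx : ⟪x, T x⟫ = ∑ i, lam i * (b.repr x i)^2 := by
    have h1 : ⟪x, T x⟫ = ⟪b.repr x, b.repr (T x)⟫ := (b.repr.inner_map_map x (T x)).symm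
    rw [h1, PiLp.inner_apply]
    congr 1
    ext i
    have h2 : b.repr (T x) i = lam i * b.repr x i := by
      have := hsym.eigenvectorBasis_apply_self_apply hn x i
      simpa using this
    simp [h2]
    ring
  have hnx : ‖x‖^2 = ∑ i, (b.repr x i)^2 := by
    have h1 : (‖x‖:ℝ)^2 = ⟪x, x⟫ := (real_inner_self_eq_norm_sq x).symm
    have h2 : ⟪x, x⟫ = ⟪b.repr x, b.repr x⟫ := (b.repr.inner_map_map x x).symm
    rw [h1, h2, PiLp.inner_apply]
    congr 1
    ext i
    simp [sq]
  constructor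
  · rw [hVx, hnx, Finset.mul_sum]
    apply Finset.sum_le_sum
    intro i _
    exact mul_le_mul_of_nonneg_right (hlam_mem i).1 (sq_nonneg _)
  · rw [hVx, hnx, Finset.mul_sum]
    apply Finset.sum_le_sum
    intro i _
    exact mul_le_mul_of_nonneg_right (hlam_mem i).2 (sq_nonneg _)

set_option maxHeartbeats 2000000 in
/-- Multidimensional pantograph equation: under the Lyapunov condition
`BᵀQ + QB = -I` with `Q` symmetric positive definite, smallest/largest
eigenvalues `c₁, c₂`, and the smallness condition `4‖QA‖² < c₁/c₂`, every
solution of `Z'(t) = B Z(t) + A Z(qt) + φ(t)` with `φ(t) → 0` obeys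
`Z(t) → 0` as `t → ∞`. -/
theorem multidim_pantograph_convergence
    (d : ℕ) (hd : 1 ≤ d)
    (q : ℝ) (hq0 : 0 < q) (hq1 : q < 1)
    (A B Q : Matrix (Fin d) (Fin d) ℝ)
    (hA : A ≠ 0)
    (hQsymm : Q.IsSymm)
    (hQpos : Q.PosDef)
    (hLyap : B.transpose * Q + Q * B = -(1 : Matrix (Fin d) (Fin d) ℝ))
    (c₁ c₂ : ℝ)
    (hc₁eig : ∃ v : Fin d → ℝ, v ≠ 0 ∧ Q.mulVec v = c₁ • v)
    (hc₂eig : ∃ v : Fin d → ℝ, v ≠ 0 ∧ Q.mulVec v = c₂ • v)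
    (hextreme : ∀ μ : ℝ, (∃ v : Fin d → ℝ, v ≠ 0 ∧ Q.mulVec v = μ • v) →
      c₁ ≤ μ ∧ μ ≤ c₂)
    (hsmall : 4 * ‖Matrix.toEuclideanCLM (𝕜 := ℝ) (Q * A)‖ ^ 2 < c₁ / c₂) :
    ∀ φ : ℝ → EuclideanSpace ℝ (Fin d),
      ContinuousOn φ (Set.Ici 0) →
      Tendsto φ atTop (nhds 0) →
      ∀ Z : ℝ → EuclideanSpace ℝ (Fin d),
        ContinuousOn Z (Set.Ici 0) →
        (∀ t > (0 : ℝ), HasDerivAt Z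
          (Matrix.toEuclideanCLM (𝕜 := ℝ) B (Z t) +
            Matrix.toEuclideanCLM (𝕜 := ℝ) A (Z (q * t)) + φ t) t) →
        Tendsto Z atTop (nhds 0) := by
  intro φ hφc hφlim Z hZc hZd
  set T := Matrix.toEuclideanCLM (𝕜 := ℝ) Q with hTdef
  set TA := Matrix.toEuclideanCLM (𝕜 := ℝ) A with hTAdef
  set TB := Matrix.toEuclideanCLM (𝕜 := ℝ) B with hTBdef
  set TBt := Matrix.toEuclideanCLM (𝕜 := ℝ) B.transpose with hTBtdef
  set TQA := Matrix.toEuclideanCLM (𝕜 := ℝ) (Q * A) with hTQAdef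
  set a := ‖TQA‖ with hadef
  have hquad := quad_form_bounds d Q hQsymm c₁ c₂ hextreme
  have hc₁pos : 0 < c₁ := by
    obtain ⟨v, hv, hQv⟩ := hc₁eig
    have h1 := hQpos.dotProduct_mulVec_pos hv
    rw [hQv] at h1
    have h2 : star v = v := by simp
    rw [h2, dotProduct_smul] at h1
    have h3 : 0 < v ⬝ᵥ v := by
      rcases lt_or_eq_of_le (Finset.sum_nonneg (fun i _ => mul_self_nonneg (v i))) with h | h
      · exact h
      · exfalso; exact hv ((dotProduct_self_eq_zero).1 h.symm)
    have h4 : c₁ • (v ⬝ᵥ v) = c₁ * (v ⬝ᵥ v) := rfl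
    rw [h4] at h1
    nlinarith
  have hc₁₂ : c₁ ≤ c₂ := (hextreme c₁ ⟨hc₁eig.choose, hc₁eig.choose_spec⟩).2
  have hc₂pos : 0 < c₂ := lt_of_lt_of_le hc₁pos hc₁₂
  have ha0 : (0:ℝ) ≤ a := norm_nonneg _
  have hsmall' : 4*a^2*c₂ < c₁ := by
    have h := (lt_div_iff₀ hc₂pos).1 hsmall
    linarith
  set ε₀ : ℝ := (1 - 4*a^2*c₂/c₁)/4 with hε₀def
  have hfrac : 4*a^2*c₂/c₁ < 1 := (div_lt_one hc₁pos).2 (by linarith)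
  have hfrac0 : 0 ≤ 4*a^2*c₂/c₁ := by positivity
  have hε₀pos : 0 < ε₀ := by rw [hε₀def]; linarith
  have hε₀le : ε₀ ≤ 1/4 := by rw [hε₀def]; linarith
  set α : ℝ := (1/2 - ε₀)/c₂ with hαdef
  set β : ℝ := 2*a^2/c₁ with hβdef
  have hαpos : 0 < α := div_pos (by linarith) hc₂pos
  have hβ0 : 0 ≤ β := by positivity
  have heq1 : α * c₂ = 1/2 - ε₀ := div_mul_cancel₀ _ hc₂pos.ne'
  have heq2 : β * c₁ = 2*a^2 := div_mul_cancel₀ _ hc₁pos.ne'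
  have hεc : ε₀ * c₁ = (c₁ - 4*a^2*c₂)/4 := by rw [hε₀def]; field_simp
  have hβα : β < α := by
    rw [hβdef, hαdef, div_lt_div_iff₀ hc₁pos hc₂pos]
    nlinarith [hεc]
  -- self-adjointness and adjoint facts
  have hstar : star Q = Q := by
    rw [Matrix.star_eq_conjTranspose, Matrix.conjTranspose_eq_transpose_of_trivial]
    exact hQsymm
  have hsaT : IsSelfAdjoint T := by
    show star T = T
    rw [hTdef, ← map_star (Matrix.toEuclideanCLM (𝕜 := ℝ)) Q, hstar]
  have hsymT : (T : EuclideanSpace ℝ (Fin d) →ₗ[ℝ] EuclideanSpace ℝ (Fin d)).IsSymmetric :=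
    hsaT.isSymmetric
  have hsymT' : ∀ u w : EuclideanSpace ℝ (Fin d), ⟪T u, w⟫ = ⟪u, T w⟫ := by
    intro u w; exact hsymT u w
  have hadjB : ∀ u w : EuclideanSpace ℝ (Fin d), ⟪TB u, w⟫ = ⟪u, TBt w⟫ := by
    intro u w
    have h1 : TBt = ContinuousLinearMap.adjoint TB := by
      rw [hTBtdef, hTBdef, ← ContinuousLinearMap.star_eq_adjoint,
        ← map_star (Matrix.toEuclideanCLM (𝕜 := ℝ)) B, Matrix.star_eq_conjTranspose,
        Matrix.conjTranspose_eq_transpose_of_trivial]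
    rw [h1, ContinuousLinearMap.adjoint_inner_right]
  have hQB : ∀ x : EuclideanSpace ℝ (Fin d), TBt (T x) + T (TB x) = -x := by
    intro x
    have h1 := congrArg (Matrix.toEuclideanCLM (𝕜 := ℝ)) hLyap
    rw [map_add, _root_.map_mul, _root_.map_mul, map_neg, _root_.map_one] at h1
    have h2 := congrArg (fun (M : EuclideanSpace ℝ (Fin d) →L[ℝ] EuclideanSpace ℝ (Fin d)) => M x) h1
    simpa using h2
  have hQAc : ∀ y : EuclideanSpace ℝ (Fin d), T (TA y) = TQA y := by
    intro y
    rw [hTQAdef, _root_.map_mul]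
    rfl
  -- the Lyapunov function
  set V : ℝ → ℝ := fun t => ⟪Z t, T (Z t)⟫ with hVdef
  set V' : ℝ → ℝ := fun t => -‖Z t‖^2 + 2*⟪Z t, TQA (Z (q*t))⟫ + 2*⟪Z t, T (φ t)⟫ with hV'def
  set g : ℝ → ℝ := fun t => ‖T (φ t)‖^2 / ε₀ with hgdef
  have hVc : ContinuousOn V (Ici 0) :=
    ContinuousOn.inner hZc (T.continuous.comp_continuousOn hZc)
  have hV0 : ∀ t : ℝ, 0 ≤ t → 0 ≤ V t := by
    intro t _
    have := (hquad (Z t)).1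
    nlinarith [sq_nonneg ‖Z t‖]
  have hgc : ContinuousOn g (Ici 0) :=
    (((T.continuous.comp_continuousOn hφc).norm.pow 2).div_const _)
  have hg0 : ∀ t : ℝ, 0 ≤ t → 0 ≤ g t := by
    intro t _; rw [hgdef]; positivity
  have hglim : Tendsto g atTop (nhds 0) := by
    have h1 : Tendsto (fun t => T (φ t)) atTop (nhds (T 0)) :=
      (T.continuous.tendsto 0).comp hφlim
    have h2 : Tendsto g atTop (nhds (‖T (0 : EuclideanSpace ℝ (Fin d))‖^2 / ε₀)) :=
      ((h1.norm).pow 2).div_const _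
    simpa using h2
  have hdV : ∀ t : ℝ, 0 < t → HasDerivAt V (V' t) t := by
    intro t ht
    have hZ' := hZd t ht
    have hTZ : HasDerivAt (fun s => T (Z s)) (T (TB (Z t) + TA (Z (q*t)) + φ t)) t :=
      (T.hasFDerivAt).comp_hasDerivAt t hZ'
    have hD := HasDerivAt.inner ℝ hZ' hTZ
    have hval : ⟪Z t, T (TB (Z t) + TA (Z (q*t)) + φ t)⟫
        + ⟪TB (Z t) + TA (Z (q*t)) + φ t, T (Z t)⟫ = V' t := by
      set x := Z t
      set y := Z (q*t)
      set p := φ t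
      have h1 : ⟪x, T (TB x + TA y + p)⟫
          = ⟪x, T (TB x)⟫ + ⟪x, TQA y⟫ + ⟪x, T p⟫ := by
        rw [map_add, map_add, inner_add_right, inner_add_right, hQAc]
      have h2 : ⟪TB x + TA y + p, T x⟫
          = ⟪x, TBt (T x)⟫ + ⟪x, TQA y⟫ + ⟪x, T p⟫ := by
        rw [inner_add_left, inner_add_left, hadjB]
        rw [real_inner_comm (T x) (TA y), hsymT' x (TA y), hQAc]
        rw [real_inner_comm (T x) p, hsymT' x p]
      have h3 : ⟪x, T (TB x)⟫ + ⟪x, TBt (T x)⟫ = -‖x‖^2 := by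
        rw [← inner_add_right, add_comm (T (TB x)) (TBt (T x)), hQB]
        rw [inner_neg_right, real_inner_self_eq_norm_sq]
      rw [hV'def]
      simp only
      rw [h1, h2]
      linarith [h3]
    rw [← hval]
    exact hD
  have hineq : ∀ t : ℝ, 0 < t → V' t ≤ -α * V t + β * V (q*t) + g t := by
    intro t ht
    set x := Z t with hx
    set y := Z (q*t) with hy
    set n1 := ‖x‖ with hn1
    set n2 := ‖y‖ with hn2
    set w := ‖T (φ t)‖ with hw
    have hn1_0 : 0 ≤ n1 := norm_nonneg _
    have hn2_0 : 0 ≤ n2 := norm_nonneg _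
    have hw0 : 0 ≤ w := norm_nonneg _
    have h1 : ⟪x, TQA y⟫ ≤ n1 * (a * n2) := by
      calc ⟪x, TQA y⟫ ≤ ‖x‖ * ‖TQA y‖ := real_inner_le_norm _ _
        _ ≤ n1 * (a * n2) := by
            apply mul_le_mul_of_nonneg_left (TQA.le_opNorm y) hn1_0
    have h2 : ⟪x, T (φ t)⟫ ≤ n1 * w := real_inner_le_norm _ _
    have h3 : c₁ * n2^2 ≤ V (q*t) := (hquad y).1
    have h4 : V t ≤ c₂ * n1^2 := (hquad x).2
    have hG : ε₀ * (g t) = w^2 := by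
      rw [hgdef]
      field_simp
      rw [hw]
    have hsplit1 : 2*(n1 * (a * n2)) ≤ n1^2/2 + 2*a^2*n2^2 := by
      nlinarith [sq_nonneg (2*a*n2 - n1)]
    have hsplit2 : 2*(n1*w) ≤ ε₀*n1^2 + g t := by
      nlinarith [sq_nonneg (ε₀*n1 - w), hε₀pos, mul_pos hε₀pos hε₀pos]
    have h5 : α * V t ≤ (1/2 - ε₀)*n1^2 := by
      calc α * V t ≤ α * (c₂ * n1^2) := mul_le_mul_of_nonneg_left h4 hαpos.le
        _ = (α * c₂) * n1^2 := by ring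
        _ = (1/2 - ε₀)*n1^2 := by rw [heq1]
    have h6 : 2*a^2*n2^2 ≤ β * V (q*t) := by
      calc 2*a^2*n2^2 = (β * c₁) * n2^2 := by rw [heq2]
        _ = β * (c₁ * n2^2) := by ring
        _ ≤ β * V (q*t) := mul_le_mul_of_nonneg_left h3 hβ0
    rw [hV'def]
    simp only
    rw [← hx, ← hy, ← hn1]
    linarith [h1, h2, h5, h6, hsplit1, hsplit2]
  have hVlim : Tendsto V atTop (nhds 0) :=
    halanay_aux hq0 hq1 hαpos hβ0 hβα hVc hV0 hgc hg0 hglim hdV hineq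
  have hZn : Tendsto (fun t => ‖Z t‖) atTop (nhds 0) := by
    have hsq : Tendsto (fun t => Real.sqrt (V t / c₁)) atTop (nhds 0) := by
      have h := (hVlim.div_const c₁).sqrt
      simpa using h
    apply squeeze_zero' ?_ ?_ hsq
    · filter_upwards with t using norm_nonneg _
    · filter_upwards [eventually_ge_atTop (0:ℝ)] with t ht
      apply Real.le_sqrt_of_sq_le
      rw [le_div_iff₀ hc₁pos]
      nlinarith [(hquad (Z t)).1]
  exact tendsto_zero_iff_norm_tendsto_zero.mpr hZn
end
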